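/- For every integer m ≥ 1, the number Σ_{j=0}^{m} 1000^j (the m-th term of OEIS sequence A261544, i.e., 1001001…001 with m+1 blocks) is not prime. -/
import Mathlib

theorem A261544_not_prime (m : ℕ) (hm : 1 ≤ m) :
    ¬ Nat.Prime (∑ j ∈ Finset.range (m + 1), 1000 ^ j) := by
  intro hp
  set k := m + 1 with hk
  have hk2 : 2 ≤ k := by omega
  set S : ℕ := ∑ j ∈ Finset.range k, 1000 ^ j with hS
  have hSbig : 1 + 1000 ≤ S := by
    have : ∑ j ∈ Finset.range 2, 1000 ^ j ≤ S := by
      apply Finset.sum_le_sum_of_subset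
      exact Finset.range_subset_range.mpr hk2
    simpa [Finset.sum_range_succ] using this
  by_cases h3 : 3 ∣ k
  · have h3S : 3 ∣ S := by
      have hz : ((S : ℕ) : ZMod 3) = 0 := by
        rw [hS]
        push_cast
        have h1000 : (1000 : ZMod 3) = 1 := by decide
        simp [h1000]
        exact (ZMod.natCast_eq_zero_iff _ _).mpr h3
      exact (ZMod.natCast_eq_zero_iff _ _).mp hz
    rcases hp.eq_one_or_self_of_dvd 3 h3S with h | h
    · omega
    · omega
  · have hcop : Nat.Coprime 3 k := (Nat.Prime.coprime_iff_not_dvd Nat.prime_three).mpr h3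
    set R : ℕ := ∑ i ∈ Finset.range k, 10 ^ i with hR
    have hRbig : 1 + 10 ≤ R := by
      have : ∑ j ∈ Finset.range 2, 10 ^ j ≤ R := by
        apply Finset.sum_le_sum_of_subset
        exact Finset.range_subset_range.mpr hk2
      simpa [Finset.sum_range_succ] using this
    have hinj : Set.InjOn (fun j => 3 * j % k) (Finset.range k) := by
      intro a ha b hb hab
      simp only [Finset.coe_range, Set.mem_Iio] at ha hb
      have h1 : 3 * a ≡ 3 * b [MOD k] := by
        unfold Nat.ModEq
        simpa using hab
      have h2 : a ≡ b [MOD k] := h1.cancel_left_of_coprime (by simpa using hcop.symm.gcd_eq_one)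
      exact (Nat.ModEq.eq_of_lt_of_lt h2 ha hb)
    have himg : Finset.image (fun j => 3 * j % k) (Finset.range k) = Finset.range k := by
      apply Finset.eq_of_subset_of_card_le
      · intro x hx
        simp only [Finset.mem_image, Finset.mem_range] at hx ⊢
        obtain ⟨j, hj, rfl⟩ := hx
        exact Nat.mod_lt _ (by omega)
      · rw [Finset.card_image_of_injOn hinj]
    have hpermN : ∑ j ∈ Finset.range k, 10 ^ (3 * j % k) = R := by
      have h : ∑ x ∈ Finset.image (fun j => 3 * j % k) (Finset.range k), 10 ^ x
          = ∑ j ∈ Finset.range k, 10 ^ (3 * j % k) :=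
        Finset.sum_image (fun a ha b hb => hinj ha hb)
      rw [himg] at h
      rw [← h, hR]
    have hperm : ∑ j ∈ Finset.range k, (10 : ℤ) ^ (3 * j % k) = (R : ℤ) := by
      exact_mod_cast congrArg (Nat.cast : ℕ → ℤ) hpermN
    have hdvd1 : ((10 : ℤ) ^ k - 1) ∣ ((S : ℤ) - (R : ℤ)) := by
      have hScast : (S : ℤ) = ∑ j ∈ Finset.range k, (10 : ℤ) ^ (3 * j) := by
        rw [hS]; push_cast
        refine Finset.sum_congr rfl fun j _ => ?_
        rw [pow_mul]; norm_num
      rw [hScast, ← hperm, ← Finset.sum_sub_distrib]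
      apply Finset.dvd_sum
      intro j hj
      have key : (10 : ℤ) ^ (3 * j) - 10 ^ (3 * j % k)
          = (((10 : ℤ) ^ k) ^ (3 * j / k) - 1) * 10 ^ (3 * j % k) := by
        have h : ((10 : ℤ) ^ k) ^ (3 * j / k) * 10 ^ (3 * j % k) = 10 ^ (3 * j) := by
          rw [← pow_mul, ← pow_add, Nat.div_add_mod]
        rw [sub_mul, one_mul, h]
      rw [key]
      exact dvd_mul_of_dvd_left
        (by simpa using sub_dvd_pow_sub_pow ((10 : ℤ) ^ k) 1 (3 * j / k)) _
    have hdvd2 : ((R : ℤ)) ∣ ((10 : ℤ) ^ k - 1) := by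
      have h := geom_sum_mul (10 : ℤ) k
      refine ⟨9, ?_⟩
      rw [hR]; push_cast
      linarith [h]
    have hdvd3 : R ∣ S := by
      have h1 : (R : ℤ) ∣ ((S : ℤ) - R) := hdvd2.trans hdvd1
      have h2 : (R : ℤ) ∣ (S : ℤ) := by simpa using dvd_add h1 (dvd_refl (R : ℤ))
      exact_mod_cast h2
    have hRS : R < S := by
      rw [hR, hS]
      apply Finset.sum_lt_sum
      · intro i _
        exact Nat.pow_le_pow_left (by norm_num) i
      · exact ⟨1, Finset.mem_range.mpr (by omega), by norm_num⟩
    rcases hp.eq_one_or_self_of_dvd R hdvd3 with h | h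
    · omega
    · omega
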